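/- Strictness for non-permutation strategies: suppose agent j reports truthfully (X̂_j = X_j), det(U_{X_i,X_j}) ≠ 0 (informative peer), X̂_i is conditionally independent of X_j given X_i, and the strategy transition matrix U_{X̂_i|X_i} is not a permutation matrix. Then DMI(X̂_i; X_j)^2 < DMI(X_i; X_j)^2. -/

import Mathlib

open MeasureTheory

/-- The joint distribution matrix of two random variables valued in `Fin C`. -/
noncomputable def jointMatrix {Ω : Type*} [MeasurableSpace Ω] (μ : Measure Ω) {C : ℕ}
    (X Y : Ω → Fin C) : Matrix (Fin C) (Fin C) ℝ :=
  Matrix.of fun x y => (μ {ω | X ω = x ∧ Y ω = y}).toReal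

/-- Determinant based mutual information: `DMI(X;Y) = |det U_{X,Y}|`. -/
noncomputable def DMI {Ω : Type*} [MeasurableSpace Ω] (μ : Measure Ω) {C : ℕ}
    (X Y : Ω → Fin C) : ℝ :=
  |(jointMatrix μ X Y).det|

/-- The transition matrix `U_{X'|X}`: entry `(x, x')` is `P[X' = x' | X = x]`. -/
noncomputable def transMatrix {Ω : Type*} [MeasurableSpace Ω] (μ : Measure Ω) {C : ℕ}
    (X X' : Ω → Fin C) : Matrix (Fin C) (Fin C) ℝ :=
  Matrix.of fun x x' => (μ {ω | X' ω = x' ∧ X ω = x}).toReal / (μ {ω | X ω = x}).toReal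

/-- A permutation matrix. -/
def IsPermMatrix {C : ℕ} (T : Matrix (Fin C) (Fin C) ℝ) : Prop :=
  ∃ π : Equiv.Perm (Fin C), ∀ i j, T i j = if π i = j then 1 else 0

/-!
A strategy `X̂ᵢ` that depends on `Xⱼ` only through `Xᵢ` factors the joint matrix as
`U_{X̂ᵢ,Xⱼ} = (U_{X̂ᵢ|Xᵢ})ᵀ U_{Xᵢ,Xⱼ}`, so `DMI(X̂ᵢ; Xⱼ) = |det U_{X̂ᵢ|Xᵢ}| · DMI(Xᵢ; Xⱼ)`, and it
remains to see that a row-stochastic matrix `T` that is not a permutation matrix has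
`|det T| < 1`. Expanding `det T` over permutations bounds it by `∑_σ ∏ᵢ T i (σ i)`, while the same
sum over *all* maps `f` equals `∏ᵢ ∑ⱼ T i j = 1`. Unless `T` is a permutation matrix, some
non-injective `f` has `∏ᵢ T i (f i) > 0`, and this term is missing from the permutation sum.
-/

open Matrix

namespace Matrix

variable {n : Type*} [Fintype n] [DecidableEq n] {T : Matrix n n ℝ}

lemma abs_det_le_sum_perm_prod (hT : ∀ i j, 0 ≤ T i j) :
    |T.det| ≤ ∑ σ : Equiv.Perm n, ∏ i, T i (σ i) := by
  rw [← det_transpose, det_apply]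
  refine (Finset.abs_sum_le_sum_abs _ _).trans (Finset.sum_le_sum fun σ _ => ?_)
  simp only [transpose_apply]
  rw [Units.smul_def, zsmul_eq_mul, abs_mul, ← Int.cast_abs, Int.abs_eq_natAbs, Int.units_natAbs,
    Nat.cast_one, Int.cast_one, one_mul, abs_of_nonneg (Finset.prod_nonneg fun i _ => hT _ _)]

lemma sum_perm_prod_lt_one (hT : T ∈ rowStochastic ℝ n) {f : n → n}
    (hf : ¬ Function.Injective f) (hpos : ∀ i, 0 < T i (f i)) :
    ∑ σ : Equiv.Perm n, ∏ i, T i (σ i) < 1 := by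
  have hsum : ∑ g : n → n, ∏ i, T i (g i) = 1 := by
    rw [← Fintype.prod_sum fun i j => T i j]
    simp [sum_row_of_mem_rowStochastic hT]
  let coeFn : Equiv.Perm n ↪ (n → n) := ⟨_, DFunLike.coe_injective⟩
  have hperms : Finset.univ.map coeFn ⊆ Finset.univ.erase f := fun g hg => by
    obtain ⟨σ, -, rfl⟩ := Finset.mem_map.1 hg
    exact Finset.mem_erase.2 ⟨fun h => hf (h ▸ σ.injective), Finset.mem_univ _⟩
  calc ∑ σ : Equiv.Perm n, ∏ i, T i (σ i)
      = ∑ g ∈ Finset.univ.map coeFn, ∏ i, T i (g i) := by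
        rw [Finset.sum_map]; rfl
    _ ≤ ∑ g ∈ Finset.univ.erase f, ∏ i, T i (g i) :=
        Finset.sum_le_sum_of_subset_of_nonneg hperms fun g _ _ =>
          Finset.prod_nonneg fun i _ => nonneg_of_mem_rowStochastic hT
    _ = 1 - ∏ i, T i (f i) := by
        rw [← hsum, ← Finset.add_sum_erase _ _ (Finset.mem_univ f)]; ring
    _ < 1 := sub_lt_self _ (Finset.prod_pos fun i _ => hpos i)

/-- If two positive entries `T i (w i)`, `T i j` shared a row, redirecting `w` at `i` to `j` would
keep all entries positive but break injectivity. -/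
lemma exists_perm_of_forall_injective (hT : T ∈ rowStochastic ℝ n)
    (h : ∀ f : n → n, (∀ i, 0 < T i (f i)) → Function.Injective f) :
    ∃ σ : Equiv.Perm n, ∀ i j, T i j = if σ i = j then 1 else 0 := by
  have hrow : ∀ i, ∃ j, 0 < T i j := fun i => by
    by_contra! hno
    have := sum_row_of_mem_rowStochastic hT i
    linarith [Finset.sum_nonpos fun j (_ : j ∈ Finset.univ) => hno j]
  choose w hw using hrow
  have hwbij : Function.Bijective w := Finite.injective_iff_bijective.1 (h w hw)
  have hzero : ∀ i j, w i ≠ j → T i j = 0 := fun i j hij => by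
    by_contra hne
    have hpos : 0 < T i j := (nonneg_of_mem_rowStochastic hT).lt_of_ne' hne
    obtain ⟨a, rfl⟩ := hwbij.2 j
    have hai : a ≠ i := fun h => hij (h ▸ rfl)
    refine hai (h (Function.update w i (w a)) (fun k => ?_) ?_)
    · rcases eq_or_ne k i with rfl | hk
      · simpa using hpos
      · simpa [hk] using hw k
    · simp [hai]
  refine ⟨Equiv.ofBijective w hwbij, fun i j => ?_⟩
  rcases eq_or_ne (w i) j with rfl | hij
  · rw [← sum_row_of_mem_rowStochastic hT i, Finset.sum_eq_single (w i)
      (fun j _ hj => hzero i j (Ne.symm hj)) (by simp)]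
    simp
  · simp [hzero i j hij, hij]

lemma abs_det_lt_one_of_not_isPermMatrix {C : ℕ} {T : Matrix (Fin C) (Fin C) ℝ}
    (hT : T ∈ rowStochastic ℝ (Fin C)) (hnp : ¬ IsPermMatrix T) : |T.det| < 1 := by
  obtain ⟨f, hpos, hf⟩ : ∃ f : Fin C → Fin C, (∀ i, 0 < T i (f i)) ∧ ¬ Function.Injective f := by
    by_contra! h
    exact hnp (exists_perm_of_forall_injective hT h)
  exact (abs_det_le_sum_perm_prod fun _ _ => nonneg_of_mem_rowStochastic hT).trans_lt
    (sum_perm_prod_lt_one hT hf hpos)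

end Matrix

lemma MeasureTheory.sum_measure_preimage_singleton_inter {Ω ι : Type*} [MeasurableSpace Ω]
    [Fintype ι] [MeasurableSpace ι] [MeasurableSingletonClass ι] (μ : Measure Ω) {Y : Ω → ι}
    (hY : Measurable Y) (s : Set Ω) : ∑ y, μ (Y ⁻¹' {y} ∩ s) = μ s := by
  simp_rw [← Measure.restrict_apply (hY (measurableSet_singleton _))]
  rw [sum_measure_preimage_singleton _ fun y _ => hY (measurableSet_singleton y)]
  simp

section Strategies

variable {Ω : Type*} [MeasurableSpace Ω] {μ : Measure Ω} {C : ℕ}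

lemma measure_fiber_ne_zero_of_det_jointMatrix_ne_zero {X Y : Ω → Fin C}
    (hdet : (jointMatrix μ X Y).det ≠ 0) (x : Fin C) : μ {ω | X ω = x} ≠ 0 := fun hx =>
  hdet <| det_eq_zero_of_row_eq_zero x fun y => by
    have hxy : μ {ω | X ω = x ∧ Y ω = y} = 0 := measure_mono_null (fun _ hω => hω.1) hx
    simp [jointMatrix, hxy]

lemma transMatrix_mem_rowStochastic [IsFiniteMeasure μ] {X X' : Ω → Fin C}
    (hX' : Measurable X') (hX : ∀ x, μ {ω | X ω = x} ≠ 0) :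
    transMatrix μ X X' ∈ rowStochastic ℝ (Fin C) := by
  refine mem_rowStochastic_iff_sum.2
    ⟨fun _ _ => by simp only [transMatrix, of_apply]; positivity, fun x => ?_⟩
  have hfiber : ∑ x', μ {ω | X' ω = x' ∧ X ω = x} = μ {ω | X ω = x} :=
    sum_measure_preimage_singleton_inter μ hX' _
  simp only [transMatrix, of_apply, ← Finset.sum_div]
  rw [← ENNReal.toReal_sum fun _ _ => measure_ne_top μ _, hfiber,
    div_self (ENNReal.toReal_ne_zero.2 ⟨hX x, measure_ne_top μ _⟩)]

variable [IsFiniteMeasure μ] {X Y Z : Ω → Fin C}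
  (hci : ∀ x z y, μ {ω | X ω = x} * μ {ω | Z ω = z ∧ Y ω = y ∧ X ω = x} =
    μ {ω | Z ω = z ∧ X ω = x} * μ {ω | Y ω = y ∧ X ω = x})
include hci

lemma measure_toReal_eq_transMatrix_mul_jointMatrix (x z y : Fin C) :
    (μ {ω | Z ω = z ∧ Y ω = y ∧ X ω = x}).toReal =
      transMatrix μ X Z x z * jointMatrix μ X Y x y := by
  by_cases hx : μ {ω | X ω = x} = 0
  · have hzyx : μ {ω | Z ω = z ∧ Y ω = y ∧ X ω = x} = 0 :=
      measure_mono_null (fun _ hω => hω.2.2) hx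
    simp [transMatrix, hx, hzyx]
  have hxr : (μ {ω | X ω = x}).toReal ≠ 0 := ENNReal.toReal_ne_zero.2 ⟨hx, measure_ne_top μ _⟩
  have hswap : {ω | Y ω = y ∧ X ω = x} = {ω | X ω = x ∧ Y ω = y} := Set.ext fun _ => and_comm
  have h := congrArg ENNReal.toReal (hci x z y)
  rw [ENNReal.toReal_mul, ENNReal.toReal_mul, hswap] at h
  simp only [transMatrix, jointMatrix, of_apply]
  field_simp
  linarith

lemma jointMatrix_eq_transpose_transMatrix_mul (hX : Measurable X) :
    jointMatrix μ Z Y = (transMatrix μ X Z)ᵀ * jointMatrix μ X Y := by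
  ext z y
  have hfiber : ∑ x, μ {ω | Z ω = z ∧ Y ω = y ∧ X ω = x} = μ {ω | Z ω = z ∧ Y ω = y} := by
    rw [← sum_measure_preimage_singleton_inter μ hX]
    exact Finset.sum_congr rfl fun x _ => congrArg μ (Set.ext fun _ => and_rotate.symm)
  calc jointMatrix μ Z Y z y = ∑ x, (μ {ω | Z ω = z ∧ Y ω = y ∧ X ω = x}).toReal := by
        rw [← ENNReal.toReal_sum fun _ _ => measure_ne_top μ _, hfiber]; rfl
    _ = ((transMatrix μ X Z)ᵀ * jointMatrix μ X Y) z y := by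
        simp only [mul_apply, transpose_apply, measure_toReal_eq_transMatrix_mul_jointMatrix hci]

end Strategies

theorem strict_loss_of_non_permutation_strategy_general {Ω : Type*} [MeasurableSpace Ω]
    (μ : Measure Ω) [IsProbabilityMeasure μ] {C : ℕ}
    (Xi Xj Xihat : Ω → Fin C)
    (hXi : Measurable Xi) (hXihat : Measurable Xihat)
    (hci : ∀ x x' y,
      μ {ω | Xi ω = x} * μ {ω | Xihat ω = x' ∧ Xj ω = y ∧ Xi ω = x} =
        μ {ω | Xihat ω = x' ∧ Xi ω = x} * μ {ω | Xj ω = y ∧ Xi ω = x})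
    (hdet : (jointMatrix μ Xi Xj).det ≠ 0)
    (hnp : ¬ IsPermMatrix (transMatrix μ Xi Xihat)) :
    DMI μ Xihat Xj ^ 2 < DMI μ Xi Xj ^ 2 := by
  have hT : transMatrix μ Xi Xihat ∈ rowStochastic ℝ (Fin C) :=
    transMatrix_mem_rowStochastic hXihat (measure_fiber_ne_zero_of_det_jointMatrix_ne_zero hdet)
  have hTdet : |(transMatrix μ Xi Xihat).det| ^ 2 < 1 :=
    pow_lt_one₀ (abs_nonneg _) (abs_det_lt_one_of_not_isPermMatrix hT hnp) two_ne_zero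
  rw [DMI, DMI, jointMatrix_eq_transpose_transMatrix_mul hci hXi, det_mul, det_transpose, abs_mul,
    mul_pow]
  exact mul_lt_of_lt_one_left (pow_pos (abs_pos.2 hdet) 2) hTdet

/-- strictness for non-permutation strategies: if agent `j` reports
truthfully, `det U_{Xᵢ,Xⱼ} ≠ 0` (informative peer), `X̂ᵢ` is conditionally independent of
`Xⱼ` given `Xᵢ`, and the strategy transition matrix `U_{X̂ᵢ|Xᵢ}` is not a permutation
matrix, then `DMI(X̂ᵢ; Xⱼ)² < DMI(Xᵢ; Xⱼ)²`. -/
theorem strict_loss_of_non_permutation_strategy {Ω : Type*} [MeasurableSpace Ω]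
    (μ : Measure Ω) [IsProbabilityMeasure μ] {C : ℕ}
    (Xi Xj Xihat : Ω → Fin C)
    (hXi : Measurable Xi) (hXj : Measurable Xj) (hXihat : Measurable Xihat)
    (hci : ∀ x x' y,
      μ {ω | Xi ω = x} * μ {ω | Xihat ω = x' ∧ Xj ω = y ∧ Xi ω = x} =
        μ {ω | Xihat ω = x' ∧ Xi ω = x} * μ {ω | Xj ω = y ∧ Xi ω = x})
    (hdet : (jointMatrix μ Xi Xj).det ≠ 0)
    (hnp : ¬ IsPermMatrix (transMatrix μ Xi Xihat)) :
    DMI μ Xihat Xj ^ 2 < DMI μ Xi Xj ^ 2 :=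
  strict_loss_of_non_permutation_strategy_general μ Xi Xj Xihat hXi hXihat hci hdet hnp
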